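/- arXiv:1101.5212 — 8 statements merged into one kernel-verified Lean document; each statement's English description precedes it below -/
import Mathlib

section
/- Let Γ be a commutative associative algebra over a field of characteristic ≠ 2 with derivation D, and define {a,b} = D(a)b - aD(b). Then for all f,g,h,k ∈ Γ: {{f,h}g, k} + {{h,k}g, f} + {{k,f}g, h} = {f,h}{g,k} + {h,k}{g,f} + {k,f}{g,h}. -/
/-- Identity (3) (even case) for the vector-type bracket
{a,b} = D(a)b - aD(b):
{{f,h}g,k} + {{h,k}g,f} + {{k,f}g,h} = {f,h}{g,k} + {h,k}{g,f} + {k,f}{g,h}. -/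
theorem vector_bracket_identity3
    {F : Type*} [Field F] (h2 : (2 : F) ≠ 0)
    {Γ : Type*} [NonUnitalCommRing Γ] [Module F Γ]
    (D : Γ →ₗ[F] Γ) (hD : ∀ a b : Γ, D (a * b) = D a * b + a * D b)
    (br : Γ → Γ → Γ) (hbr : ∀ a b : Γ, br a b = D a * b - a * D b) :
    ∀ f g h k : Γ,
      br (br f h * g) k + br (br h k * g) f + br (br k f * g) h
        = br f h * br g k + br h k * br g f + br k f * br g h := by
  intro f g h k
  simp only [hbr, hD, map_sub, map_add]
  simp only [mul_sub, sub_mul, mul_add, add_mul]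
  simp only [mul_comm, mul_left_comm, mul_assoc]
  abel
end

section
/- Let Γ be a commutative associative algebra over a field of characteristic ≠ 2 with a Poisson-type bracket {,}, i.e., {,} is skew-symmetric, satisfies the Leibniz rule {a, bc} = {a,b}c + b{a,c}, and the Jacobi identity. Then the identities {{f,h}g,k} + {{h,k}g,f} + {{k,f}g,h} = {f,h}{g,k} + {h,k}{g,f} + {k,f}{g,h} hold for all f,g,h,k ∈ Γ. -/
/-- A Poisson bracket (skew, Leibniz, Jacobi) on a commutative
associative algebra satisfies the cyclic Jordan-bracket identity (3). -/
theorem poisson_bracket_identity3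
    {F : Type*} [Field F] (h2 : (2 : F) ≠ 0)
    {Γ : Type*} [NonUnitalCommRing Γ] [Module F Γ]
    (br : Γ →ₗ[F] Γ →ₗ[F] Γ)
    (hskew : ∀ a b : Γ, br a b = - br b a)
    (hleib : ∀ a b c : Γ, br a (b * c) = br a b * c + b * br a c)
    (hjac : ∀ a b c : Γ, br a (br b c) + br b (br c a) + br c (br a b) = 0) :
    ∀ f g h k : Γ,
      br (br f h * g) k + br (br h k * g) f + br (br k f * g) h
        = br f h * br g k + br h k * br g f + br k f * br g h := by
  intro f g h k
  have j : br k (br f h) = -(br f (br h k) + br h (br k f)) := by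
    have := hjac k f h
    rw [hskew h k, hskew f h] at this ⊢
    abel_nf at this ⊢
    linear_combination (norm := abel) this
  rw [hskew (br f h * g) k, hleib, hskew (br h k * g) f, hleib,
    hskew (br k f * g) h, hleib, hskew g k, hskew g f, hskew g h, j]
  simp only [neg_add_rev, neg_mul, mul_neg, neg_neg, add_mul]
  abel
end

section
/- Let A be a prime associative algebra and φ : A → A a linear map such that φ(a)bc = abφ(c) for all a,b,c ∈ A. Then φ(ab)·d·c = a·φ(b)·d·c for all a,b,c,d ∈ A, and consequently φ(ab) = φ(a)b = aφ(b) for all a,b ∈ A (i.e., φ lies in the centroid of A) provided A³ ≠ 0. -/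
/-- If A is prime associative and φ(a)bc = abφ(c) for all a,b,c,
then φ(ab)dc = aφ(b)dc, and consequently (if A³ ≠ 0) φ is in the centroid:
φ(ab) = φ(a)b = aφ(b). -/
theorem prime_centroid_of_balanced
    {F : Type*} [Field F] (h2 : (2 : F) ≠ 0)
    {A : Type*} [NonUnitalRing A] [Module F A]
    (hprime : ∀ a b : A, (∀ r : A, a * r * b = 0) → a = 0 ∨ b = 0)
    (hA3 : ∃ a b c : A, a * b * c ≠ 0)
    (φ : A →ₗ[F] A)
    (hφ : ∀ a b c : A, φ a * b * c = a * b * φ c) :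
    (∀ a b c d : A, φ (a * b) * d * c = a * φ b * d * c) ∧
    (∀ a b : A, φ (a * b) = φ a * b ∧ φ (a * b) = a * φ b) := by
  obtain ⟨a0, b0, c0, h0⟩ := hA3
  have hc0 : c0 ≠ 0 := by
    intro h; exact h0 (by simp [h])
  have key1 : ∀ a b c d : A, φ (a * b) * d * c = a * φ b * d * c := by
    intro a b c d
    calc φ (a * b) * d * c = (a * b) * d * φ c := hφ (a * b) d c
      _ = a * (b * d * φ c) := by simp only [mul_assoc]
      _ = a * (φ b * d * c) := by rw [hφ b d c]
      _ = a * φ b * d * c := by simp only [mul_assoc]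
  refine ⟨key1, fun a b => ?_⟩
  have hright : φ (a * b) = a * φ b := by
    have h : ∀ r : A, (φ (a * b) - a * φ b) * r * c0 = 0 := by
      intro r
      rw [sub_mul, sub_mul, key1 a b c0 r, sub_self]
    rcases hprime _ _ h with h' | h'
    · exact sub_eq_zero.mp h'
    · exact absurd h' hc0
  have hleft : φ (a * b) = φ a * b := by
    have h : ∀ r : A, (φ (a * b) - φ a * b) * r * c0 = 0 := by
      intro r
      have e1 : φ (a * b) * r * c0 = a * b * r * φ c0 := hφ (a * b) r c0
      have e2 : φ a * b * r * c0 = a * b * r * φ c0 := by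
        calc φ a * b * r * c0 = φ a * (b * r) * c0 := by simp only [mul_assoc]
          _ = a * (b * r) * φ c0 := hφ a (b * r) c0
          _ = a * b * r * φ c0 := by simp only [mul_assoc]
      rw [sub_mul, sub_mul, e1, e2, sub_self]
    rcases hprime _ _ h with h' | h'
    · exact sub_eq_zero.mp h'
    · exact absurd h' hc0
  exact ⟨hleft, hright⟩
end

section
/- Let Γ be a commutative associative algebra with derivation D and bracket {a,b} = D(a)b - aD(b), and let φ : Γ → Γ be a centroid element: φ(ab) = φ(a)b = aφ(b). Then φ{a,b} = (1/2)({φ(a), b} + {a, φ(b)}) for all a,b ∈ Γ, i.e., φ is a 1/2-derivation of the bracket. -/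
/-- A centroid element φ of a commutative associative algebra Γ
with derivation D is a 1/2-derivation of the vector-type bracket
{a,b} = D(a)b - aD(b). -/
theorem centroid_is_half_derivation_of_vector_bracket
    {F : Type*} [Field F] (h2 : (2 : F) ≠ 0)
    {Γ : Type*} [NonUnitalCommRing Γ] [Module F Γ]
    (D : Γ →ₗ[F] Γ) (hD : ∀ a b : Γ, D (a * b) = D a * b + a * D b)
    (br : Γ → Γ → Γ) (hbr : ∀ a b : Γ, br a b = D a * b - a * D b)
    (φ : Γ →ₗ[F] Γ)
    (hcent : ∀ a b : Γ, φ (a * b) = φ a * b ∧ φ (a * b) = a * φ b) :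
    ∀ a b : Γ, φ (br a b) = (2 : F)⁻¹ • (br (φ a) b + br a (φ b)) := by
  intro a b
  have h1 : φ a * b = a * φ b := by rw [← (hcent a b).1, (hcent a b).2]
  have key : D (φ a) * b + φ a * D b = D a * φ b + a * D (φ b) := by
    calc D (φ a) * b + φ a * D b = D (φ a * b) := (hD _ _).symm
      _ = D (a * φ b) := by rw [h1]
      _ = D a * φ b + a * D (φ b) := hD _ _
  have key' : D (φ a) * b = D a * φ b + a * D (φ b) - φ a * D b := by
    rw [eq_sub_iff_add_eq]; exact key
  have hφbr : φ (br a b) = D a * φ b - φ a * D b := by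
    rw [hbr, map_sub, (hcent (D a) b).2, (hcent a (D b)).1]
  rw [hφbr, eq_inv_smul_iff₀ h2, hbr, hbr, key', two_smul]
  abel
end

section
/- Let Γ be a commutative associative algebra over a field of characteristic ≠ 2 with a bilinear bracket {,}, and let J = Γ ⊕ Γx be the Kantor double (even case). Let ψ₀ : Γ → Γ be in the centroid of Γ (ψ₀(ab) = ψ₀(a)b = aψ₀(b)) and a 1/2-derivation of the bracket (ψ₀{a,b} = (1/2){ψ₀(a),b} + (1/2){a,ψ₀(b)}). Define ψ : J → J by ψ(a + bx) = ψ₀(a) + ψ₀(b)x. Then ψ is a 1/2-derivation of J: ψ(u·v) = (1/2)(ψ(u)·v + u·ψ(v)) for all u,v ∈ J. -/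
/-- If ψ₀ is a centroid element of Γ and a 1/2-derivation of the
bracket, then ψ(a + bx) = ψ₀(a) + ψ₀(b)x is a 1/2-derivation of the Kantor
double J = Γ ⊕ Γx (modeled as Γ × Γ). -/
theorem extension_is_half_derivation_of_kantor_double
    {F : Type*} [Field F] (h2 : (2 : F) ≠ 0)
    {Γ : Type*} [NonUnitalCommRing Γ] [Module F Γ]
    (br : Γ →ₗ[F] Γ →ₗ[F] Γ)
    (mul : (Γ × Γ) → (Γ × Γ) → (Γ × Γ))
    (hmul : ∀ a b c d : Γ, mul (a, b) (c, d) = (a * c + br b d, a * d + b * c))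
    (ψ₀ : Γ →ₗ[F] Γ)
    (hcent : ∀ a b : Γ, ψ₀ (a * b) = ψ₀ a * b ∧ ψ₀ (a * b) = a * ψ₀ b)
    (hhalf : ∀ a b : Γ,
      ψ₀ (br a b) = (2 : F)⁻¹ • br (ψ₀ a) b + (2 : F)⁻¹ • br a (ψ₀ b))
    (ψ : (Γ × Γ) → (Γ × Γ))
    (hψ : ∀ a b : Γ, ψ (a, b) = (ψ₀ a, ψ₀ b)) :
    ∀ u v : Γ × Γ, ψ (mul u v) = (2 : F)⁻¹ • (mul (ψ u) v + mul u (ψ v)) := by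
  rintro ⟨a, b⟩ ⟨c, d⟩
  rw [hmul, hψ, hψ, hψ, hmul, hmul]
  refine Prod.ext ?_ ?_
  · simp only [Prod.smul_mk, Prod.mk_add_mk]
    rw [map_add, hhalf, ← (hcent a c).1, ← (hcent a c).2]
    match_scalars <;> field_simp <;> ring
  · simp only [Prod.smul_mk, Prod.mk_add_mk]
    rw [map_add, ← (hcent a d).1, ← (hcent a d).2, ← (hcent b c).1,
      ← (hcent b c).2]
    match_scalars <;> field_simp <;> ring
end

section
/- Let Γ be a prime commutative associative algebra over a field F of characteristic ≠ 2 with bilinear bracket {,}, let J = Γ ⊕ Γx be the Kantor double, δ ∈ F with δ ∉ {0, 1/2, 1}, and φ : J → J a linear map preserving the summands Γ and Γx and satisfying φ(u·v) = δ(φ(u)·v + u·φ(v)). Assume φ|_Γ = 0 (which holds since prime associative algebras have no nonzero δ-derivations for δ ≠ 0,1/2,1). Then φ = 0. -/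
/-- For a prime commutative associative Γ and δ ∉ {0,1/2,1}, any
δ-derivation φ of the Kantor double J = Γ ⊕ Γx (modeled Γ × Γ) which preserves
the summands and vanishes on Γ is zero. -/
theorem kantor_double_no_delta_derivations
    {F : Type*} [Field F] (h2 : (2 : F) ≠ 0)
    {Γ : Type*} [NonUnitalCommRing Γ] [Module F Γ] [Nontrivial Γ]
    (hprime : ∀ a b : Γ, (∀ r : Γ, a * r * b = 0) → a = 0 ∨ b = 0)
    (br : Γ →ₗ[F] Γ →ₗ[F] Γ)
    (mul : (Γ × Γ) → (Γ × Γ) → (Γ × Γ))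
    (hmul : ∀ a b c d : Γ, mul (a, b) (c, d) = (a * c + br b d, a * d + b * c))
    (δ : F) (hδ0 : δ ≠ 0) (hδh : δ ≠ 1/2) (hδ1 : δ ≠ 1)
    (φ : (Γ × Γ) →ₗ[F] (Γ × Γ))
    (hpres0 : ∀ a : Γ, (φ (a, 0)).2 = 0)
    (hpres1 : ∀ b : Γ, (φ (0, b)).1 = 0)
    (hder : ∀ u v : Γ × Γ, φ (mul u v) = δ • (mul (φ u) v + mul u (φ v)))
    (hΓ0 : ∀ a : Γ, φ (a, 0) = 0) :
    φ = 0 := by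
  set f : Γ → Γ := fun b => (φ (0, b)).2 with hf
  have hφ0b : ∀ b : Γ, φ (0, b) = (0, f b) := fun b => Prod.ext (hpres1 b) rfl
  -- key recursion : f (a*c) = δ • (a * f c)
  have key : ∀ a c : Γ, f (a * c) = δ • (a * f c) := by
    intro a c
    have h := hder (a, 0) (0, c)
    rw [hmul, hΓ0, hφ0b] at h
    rw [← Prod.mk_zero_zero, hmul, hmul] at h
    simp only [mul_zero, zero_mul, map_zero, LinearMap.zero_apply, add_zero,
      zero_add] at h
    have := congrArg Prod.snd h
    simpa [hf, Prod.smul_snd] using this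
  -- cancel δ : a * f (b*c) = a * b * f c
  have key2 : ∀ a b c : Γ, a * b * f c = 0 := by
    intro a₀ b c
    -- first : b * f c = 0 suffices; prove x * t = 0 trick
    have cancel : ∀ a b c : Γ, a * f (b * c) = a * b * f c := by
      intro a b c
      have h1 : f (a * b * c) = δ • (a * b * f c) := key (a * b) c
      have h2' : f (a * (b * c)) = δ • (a * f (b * c)) := key a (b * c)
      rw [mul_assoc, h2'] at h1
      exact smul_right_injective Γ hδ0 h1
    -- t := δ•(b*f c) - b*f c is annihilated on the left
    have ht : ∀ x : Γ, x * (δ • (b * f c) - b * f c) = 0 := by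
      intro x
      have h1 : x * f (b * c) = x * b * f c := cancel x b c
      rw [key b c, mul_assoc] at h1
      rw [mul_sub, h1, sub_self]
    obtain ⟨a, ha⟩ := exists_ne (0 : Γ)
    have ht0 : δ • (b * f c) - b * f c = 0 := by
      rcases hprime a (δ • (b * f c) - b * f c) (fun r => ht (a * r)) with h | h
      · exact absurd h ha
      · exact h
    have hbfc : b * f c = 0 := by
      have : (δ - 1) • (b * f c) = 0 := by
        rw [sub_smul, one_smul]; exact ht0
      rcases smul_eq_zero.mp this with h | h
      · exact absurd (by linear_combination h : δ = 1) hδ1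
      · exact h
    rw [mul_assoc, hbfc, mul_zero]
  have hfz : ∀ c : Γ, f c = 0 := by
    intro c
    obtain ⟨a, ha⟩ := exists_ne (0 : Γ)
    rcases hprime a (f c) (fun r => key2 a r c) with h | h
    · exact absurd h ha
    · exact h
  apply LinearMap.ext
  intro p
  have hp : (p.1, p.2) = p := rfl
  calc φ p = φ ((p.1, 0) + (0, p.2)) := by rw [show ((p.1,0)+(0,p.2) : Γ×Γ) = p by simp]
    _ = φ (p.1, 0) + φ (0, p.2) := map_add _ _ _
    _ = 0 := by rw [hΓ0, hφ0b, hfz]; simp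
end

section
/- Let Γ be a prime commutative associative algebra of characteristic ≠ 2 with Γ·Γ·Γ ≠ 0, and φ : Γ → Γ a linear map with φ(ab) = (1/2)(φ(a)b + aφ(b)) for all a,b, and suppose additionally that φ is in the centroid: φ(ab) = φ(a)b = aφ(b). Let c ∈ Γ and let ψ_c ∈ Γ be such that for all a,b: (1/2)φ(a)bc + (1/4)aφ(b)c + (1/4)ab·ψ_c = (1/2)φ(ab)c + (1/2)ab·ψ_c. Then ab(ψ_c - φ(c)) = 0 for all a,b, and hence ψ_c = φ(c). -/
/-- Key computation of Theorem 3.1: for a prime commutative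
associative Γ (char ≠ 2) with φ a 1/2-derivation lying in the centroid, if ψc
satisfies (1/2)φ(a)bc + (1/4)aφ(b)c + (1/4)ab·ψc = (1/2)φ(ab)c + (1/2)ab·ψc
for all a,b, then ab(ψc - φ(c)) = 0 for all a,b, and ψc = φ(c). -/
theorem half_superderivation_odd_part_action
    {F : Type*} [Field F] (h2 : (2 : F) ≠ 0)
    {Γ : Type*} [NonUnitalCommRing Γ] [Module F Γ] [Nontrivial Γ]
    (hprime : ∀ a b : Γ, (∀ r : Γ, a * r * b = 0) → a = 0 ∨ b = 0)
    (φ : Γ →ₗ[F] Γ)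
    (hhalf : ∀ a b : Γ, φ (a * b) = (2 : F)⁻¹ • (φ a * b + a * φ b))
    (hcent : ∀ a b : Γ, φ (a * b) = φ a * b ∧ φ (a * b) = a * φ b)
    (c : Γ) (ψc : Γ)
    (hψ : ∀ a b : Γ,
      (2 : F)⁻¹ • (φ a * b * c) + (4 : F)⁻¹ • (a * φ b * c)
          + (4 : F)⁻¹ • (a * b * ψc)
        = (2 : F)⁻¹ • (φ (a * b) * c) + (2 : F)⁻¹ • (a * b * ψc)) :
    (∀ a b : Γ, a * b * (ψc - φ c) = 0) ∧ ψc = φ c := by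
  have h4 : (4 : F) ≠ 0 := by
    intro h
    apply h2
    have : (2 : F) * 2 = 0 := by norm_num [h] at h ⊢; linear_combination h
    rcases mul_eq_zero.mp this with h' | h' <;> exact h'
  have key : ∀ a b : Γ, a * b * (ψc - φ c) = 0 := by
    intro a b
    have h1 := hψ a b
    rw [← (hcent a b).1, ← (hcent a b).2] at h1
    -- h1 : 2⁻¹•X + 4⁻¹•X + 4⁻¹•Y = 2⁻¹•X + 2⁻¹•Y, X = φ(a*b)*c, Y = a*b*ψc
    set X := φ (a * b) * c with hX
    set Y := a * b * ψc with hY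
    have h3 : (4 : F)⁻¹ • X + (4 : F)⁻¹ • Y = (2 : F)⁻¹ • Y := by
      have := h1
      rw [add_assoc] at this
      exact add_left_cancel this
    have h5 : (4 : F)⁻¹ • X = (4 : F)⁻¹ • Y := by
      have h6 : (2 : F)⁻¹ • Y = (4 : F)⁻¹ • Y + (4 : F)⁻¹ • Y := by
        rw [← add_smul]
        congr 1
        field_simp
        ring
      rw [h6] at h3
      exact add_right_cancel h3
    have hXY : X = Y := by
      have := congrArg (fun z => (4 : F) • z) h5
      simpa [smul_smul, mul_inv_cancel₀ h4] using this
    have hXc : X = a * b * φ c := by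
      rw [hX, ← (hcent (a * b) c).1, (hcent (a * b) c).2]
    rw [mul_sub, ← hY, ← hXY, hXc, sub_self]
  refine ⟨key, ?_⟩
  obtain ⟨x, hx⟩ := exists_ne (0 : Γ)
  rcases hprime x (ψc - φ c) (fun r => key x r) with h | h
  · exact absurd h hx
  · exact sub_eq_zero.mp h
end

section
/- Let Γ be a commutative associative algebra over a field of characteristic ≠ 2 with a bilinear bracket satisfying identities (5) and (10): (i) {fhg,k} - fh{g,k} = ({hk,g}f - {hk,gf}) + ({kf,g}h - {kf,gh}) and (ii) {fhg,k} - {fh,gk} = {kfg,h} - {kf,gh}, for all f,g,h,k ∈ Γ. Then Γ satisfies identity (4): {hk,g}f - hk{g,f} = {kf,g}h - kf{g,h} for all f,g,h,k ∈ Γ. -/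
/-- For a commutative associative Γ (char ≠ 2) with a bilinear
bracket satisfying identities (5) and (10), identity (4) follows. -/
theorem identities_5_10_imply_4
    {F : Type*} [Field F] (h2 : (2 : F) ≠ 0)
    {Γ : Type*} [NonUnitalCommRing Γ] [Module F Γ]
    (br : Γ →ₗ[F] Γ →ₗ[F] Γ)
    (h5 : ∀ f g h k : Γ,
      br (f * h * g) k - f * h * br g k
        = (br (h * k) g * f - br (h * k) (g * f))
          + (br (k * f) g * h - br (k * f) (g * h)))
    (h10 : ∀ f g h k : Γ,
      br (f * h * g) k - br (f * h) (g * k)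
        = br (k * f * g) h - br (k * f) (g * h)) :
    ∀ f g h k : Γ,
      br (h * k) g * f - h * k * br g f = br (k * f) g * h - k * f * br g h := by
  intro f g h k
  linear_combination (norm := abel) (h10 k g f h) + (h5 h g k f) - (h5 k g f h)
end
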